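/- For every positive integer r, ∑_{k=r}^∞ ((-1)^k * binomial(k,r)) / (k^2 * 2^k) = ((-1)^r / r) * ∑_{k=r}^∞ 1/(k * 3^k). -/

import Mathlib

/-!
Write `r = m + 1` and `y = x / (1 - x)`, so that `x = 1/3` gives `y = 1/2`. Absorbing one factor
`k + r` into the binomial coefficient turns the left side into `(-1)^r / r * ∑ c_k y^(k+m+1)` with
`c_k = (-1)^k C(k+m, m) / (k+m+1)`. Expanding `y^(a+1) = ∑_j C(j+a, a) x^(j+a+1)` gives a double
series, absolutely convergent for `|x| < 1/2`; collecting powers of `x` instead (Euler's series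
transformation), the coefficient of `x^(n+m+1)` is
`∑_k (-1)^k C(k+m, m) C(n+m, k+m) / (k+m+1) = 1 / (n+m+1)`.
-/

open Finset

theorem HasSum.sum_antidiagonal {α A : Type*} [AddCommMonoid α] [TopologicalSpace α]
    [ContinuousAdd α] [RegularSpace α] [AddCommMonoid A] [HasAntidiagonal A]
    {f : A × A → α} {a : α} (hf : HasSum f a) :
    HasSum (fun n ↦ ∑ kl ∈ antidiagonal n, f kl) a :=
  (HasAntidiagonal.sigmaAntidiagonalEquivProd.hasSum_iff.2 hf).sigma fun n ↦ by
    rw [← sum_coe_sort]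
    exact hasSum_fintype _

theorem hasSum_choose_mul_pow_add_one {x : ℝ} (hx : |x| < 1) (a : ℕ) :
    HasSum (fun j ↦ ((j + a).choose a : ℝ) * x ^ (j + a + 1)) ((x / (1 - x)) ^ (a + 1)) := by
  have h := (hasSum_choose_mul_geometric_of_norm_lt_one a (by rwa [Real.norm_eq_abs])).mul_left
    (x ^ (a + 1))
  rw [div_pow, div_eq_mul_one_div]
  exact h.congr_fun fun j ↦ by ring

theorem tsum_mul_div_one_sub_pow_eq_tsum_sum_choose_mul_pow (c : ℕ → ℝ) (m : ℕ) {x : ℝ}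
    (hx : |x| < 1) (hc : Summable fun k ↦ |c k| * (|x| / (1 - |x|)) ^ k) :
    ∑' k, c k * (x / (1 - x)) ^ (k + m + 1) =
      ∑' n, (∑ k ∈ range (n + 1), c k * (n + m).choose (k + m)) * x ^ (n + m + 1) := by
  set F : ℕ × ℕ → ℝ := fun p ↦ c p.1 * (((p.2 + (p.1 + m)).choose (p.1 + m) : ℝ) *
    x ^ (p.2 + (p.1 + m) + 1))
  have hrow (k : ℕ) : HasSum (fun j ↦ F (k, j)) (c k * (x / (1 - x)) ^ (k + m + 1)) :=
    (hasSum_choose_mul_pow_add_one hx (k + m)).mul_left (c k)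
  have habs_row (k : ℕ) :
      HasSum (fun j ↦ |F (k, j)|) (|c k| * (|x| / (1 - |x|)) ^ (k + m + 1)) :=
    ((hasSum_choose_mul_pow_add_one (by rwa [abs_abs]) (k + m)).mul_left |c k|).congr_fun
      fun j ↦ by simp only [F, abs_mul, abs_pow, Nat.abs_cast]
  have habs : Summable fun p ↦ |F p| := by
    refine (summable_prod_of_nonneg fun _ ↦ abs_nonneg _).2
      ⟨fun k ↦ (habs_row k).summable, ?_⟩
    simp only [fun k ↦ (habs_row k).tsum_eq]
    exact (hc.mul_right ((|x| / (1 - |x|)) ^ (m + 1))).congr fun k ↦ by ring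
  have hF : HasSum F (∑' p, F p) := habs.of_abs.hasSum
  rw [(hF.prod_fiberwise hrow).tsum_eq, ← hF.sum_antidiagonal.tsum_eq]
  refine tsum_congr fun n ↦ ?_
  rw [Nat.sum_antidiagonal_eq_sum_range_succ_mk, sum_mul]
  refine sum_congr rfl fun k hk ↦ ?_
  simp only [F, show n - k + (k + m) = n + m by grind]
  ring

theorem sum_range_neg_one_pow_mul_choose_mul_choose_eq_zero (m n : ℕ) :
    ∑ k ∈ range (n + 2), (-1 : ℤ) ^ k * (k + m).choose m * (n + m + 1).choose (k + m) = 0 := by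
  have h (k : ℕ) : ((k + m).choose m * (n + m + 1).choose (k + m) : ℤ) =
      (n + m + 1).choose m * (n + 1).choose k := by
    rw [mul_comm]
    exact_mod_cast (Nat.choose_mul (by omega : m ≤ k + m)).trans (by
      rw [Nat.add_sub_cancel, show n + m + 1 - m = n + 1 by omega])
  simp only [mul_assoc, h, mul_left_comm _ ((n + m + 1).choose m : ℤ), ← mul_sum]
  rw [Int.alternating_sum_range_choose_of_ne n.succ_ne_zero, mul_zero]

theorem sum_range_neg_one_pow_mul_choose_mul_choose_succ (m n : ℕ) :
    ∑ k ∈ range (n + 1), (-1 : ℤ) ^ k * (k + m).choose m * (n + m + 1).choose (k + m + 1) = 1 := by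
  induction n with
  | zero => simp
  | succ n ih =>
    have pascal (k : ℕ) : ((n + 1 + m + 1).choose (k + m + 1) : ℤ) =
        (n + m + 1).choose (k + m) + (n + m + 1).choose (k + m + 1) := by
      rw [show n + 1 + m + 1 = n + m + 1 + 1 by omega]
      exact_mod_cast Nat.choose_succ_succ' _ _
    simp only [pascal, mul_add, sum_add_distrib,
      sum_range_neg_one_pow_mul_choose_mul_choose_eq_zero, zero_add]
    rw [sum_range_succ, Nat.choose_eq_zero_of_lt (by omega : n + m + 1 < n + 1 + m + 1), ih]
    simp

theorem sum_range_neg_one_pow_mul_choose_mul_choose_div (m n : ℕ) :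
    ∑ k ∈ range (n + 1), (-1 : ℝ) ^ k * (k + m).choose m * (n + m).choose (k + m) / (k + m + 1)
      = 1 / (n + m + 1) := by
  have absorb (k : ℕ) : ((n + m).choose (k + m) / (k + m + 1) : ℝ) =
      (n + m + 1).choose (k + m + 1) / (n + m + 1) := by
    rw [div_eq_div_iff (by positivity) (by positivity), mul_comm]
    exact_mod_cast Nat.add_one_mul_choose_eq (n + m) (k + m)
  simp only [mul_div_assoc, absorb]
  simp only [← mul_div_assoc, ← sum_div]
  congr 1
  exact_mod_cast sum_range_neg_one_pow_mul_choose_mul_choose_succ m n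

theorem tsum_neg_one_pow_mul_choose_div_sq_mul_pow {r : ℕ} (hr : 0 < r) {x : ℝ}
    (hx : |x| < 1 / 2) :
    ∑' k : ℕ, (-1 : ℝ) ^ (k + r) * (k + r).choose r / ((k : ℝ) + r) ^ 2 * (x / (1 - x)) ^ (k + r)
      = (-1 : ℝ) ^ r / r * ∑' k : ℕ, x ^ (k + r) / ((k : ℝ) + r) := by
  obtain ⟨m, rfl⟩ : ∃ m, r = m + 1 := ⟨r - 1, by omega⟩
  set c : ℕ → ℝ := fun k ↦ (-1) ^ k * (k + m).choose m / (k + m + 1)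
  have absorb (k : ℕ) : (-1 : ℝ) ^ (k + (m + 1)) * (k + (m + 1)).choose (m + 1) /
      ((k : ℝ) + (m + 1 : ℕ)) ^ 2 = (-1) ^ (m + 1) / (m + 1 : ℕ) * c k := by
    have h : ((k + m + 1).choose (m + 1) * (m + 1) : ℝ) = (k + m + 1) * (k + m).choose m := by
      exact_mod_cast (Nat.add_one_mul_choose_eq (k + m) m).symm
    simp only [c, ← add_assoc]
    field_simp
    push_cast
    linear_combination (-1 : ℝ) ^ (k + m + 1) * (k + m + 1) * h
  have hc : Summable fun k ↦ |c k| * (|x| / (1 - |x|)) ^ k := by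
    have ht0 : 0 ≤ |x| / (1 - |x|) := div_nonneg (abs_nonneg x) (by linarith)
    have ht : ‖|x| / (1 - |x|)‖ < 1 := by
      rw [Real.norm_of_nonneg ht0, div_lt_one (by linarith)]
      linarith
    refine (summable_choose_mul_geometric_of_norm_lt_one m ht).of_nonneg_of_le
      (fun k ↦ by positivity) fun k ↦ ?_
    gcongr
    rw [abs_div, abs_mul, abs_pow, abs_neg, abs_one, one_pow, one_mul, Nat.abs_cast]
    exact div_le_self (by positivity) (by rw [abs_of_pos (by positivity)]; linarith)
  rw [tsum_congr fun k ↦ by rw [absorb, mul_assoc], tsum_mul_left]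
  simp only [← add_assoc]
  rw [tsum_mul_div_one_sub_pow_eq_tsum_sum_choose_mul_pow c m (by linarith) hc]
  congr 1
  refine tsum_congr fun n ↦ ?_
  simp only [c, div_mul_eq_mul_div, sum_range_neg_one_pow_mul_choose_mul_choose_div]
  push_cast
  ring

theorem renyi_series_identity_third (r : ℕ) (hr : 0 < r) :
    ∑' k : ℕ, ((-1 : ℝ) ^ (k + r) * ((k + r).choose r))
        / (((k + r) : ℝ) ^ 2 * 2 ^ (k + r))
      = ((-1 : ℝ) ^ r / r) * ∑' k : ℕ, 1 / (((k + r) : ℝ) * 3 ^ (k + r)) := by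
  have h := tsum_neg_one_pow_mul_choose_div_sq_mul_pow hr (x := 1 / 3)
    (by rw [abs_of_pos (by norm_num)]; norm_num)
  rw [show (1 / 3 : ℝ) / (1 - 1 / 3) = 1 / 2 by norm_num] at h
  convert h using 3 with k
  · rw [one_div_pow, mul_one_div, div_div]
  · ext k
    rw [one_div_pow, div_div, mul_comm]
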